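/- q-deformed continued fraction formula for left q-rationals: let 0 < q < 1 and let a = (a₁, …, a₂ₙ) be a positive even continued form (a₁ ≥ 0 and aᵢ ≥ 1 for 2 ≤ i ≤ 2n). Writing [m]_q := 1 + q + ⋯ + q^{m−1} and [m]♭_q := 1 + q + ⋯ + q^{m−2} + q^m, define y₂ₙ := [a₂ₙ]♭_{q⁻¹} and, for k = 2n−1 down to 1, y_k := [a_k]_q + q^{a_k}/y_{k+1} if k is odd, and y_k := [a_k]_{q⁻¹} + q^{−a_k}/y_{k+1} if k is even. Then y_k > 0 for all 2 ≤ k ≤ 2n, the Möbius image of 1/(1−q) under β(a, q) is well-defined (the denominator C·(1/(1−q)) + D is nonzero, where (C, D) is the second row of β(a, q)), and this Möbius image equals y₁. -/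
import Mathlib


open Matrix Filter

/-- The q-deformed generator σ₁(q) = [[q⁻¹, −q⁻¹], [0, 1]]. -/
noncomputable def sig1 (q : ℝ) : Matrix (Fin 2) (Fin 2) ℝ := !![q⁻¹, -q⁻¹; 0, 1]

/-- The q-deformed generator σ₂(q) = [[1, 0], [1, q⁻¹]]. -/
noncomputable def sig2 (q : ℝ) : Matrix (Fin 2) (Fin 2) ℝ := !![1, 0; 1, q⁻¹]

/-- `betaMat q a k` is the product of the first `k` alternating factors
`σ₁(q)^{-a 1} · σ₂(q)^{a 2} · σ₁(q)^{-a 3} ⋯` (indices start at 1). -/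
noncomputable def betaMat (q : ℝ) (a : ℕ → ℤ) : ℕ → Matrix (Fin 2) (Fin 2) ℝ
  | 0 => 1
  | k + 1 => betaMat q a k *
      (if (k + 1) % 2 = 1 then sig1 q ^ (-(a (k + 1))) else sig2 q ^ (a (k + 1)))

/-- Möbius action of a 2×2 real matrix on a real number: z ↦ (Az + B)/(Cz + D). -/
noncomputable def mobiusAct (M : Matrix (Fin 2) (Fin 2) ℝ) (z : ℝ) : ℝ :=
  (M 0 0 * z + M 0 1) / (M 1 0 * z + M 1 1)

/-- Möbius image of ∞ under a 2×2 real matrix: ∞ ↦ A/C. -/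
noncomputable def mobiusInf (M : Matrix (Fin 2) (Fin 2) ℝ) : ℝ := M 0 0 / M 1 0

/-- `a` (on indices 1,…,2n) is an even continued form: either `a₁ ≥ 0` and `aᵢ ≥ 1` for
`2 ≤ i ≤ 2n`, or `a₁ ≤ 0` and `aᵢ ≤ −1` for `2 ≤ i ≤ 2n`. -/
def IsEvenForm (n : ℕ) (a : ℕ → ℤ) : Prop :=
  1 ≤ n ∧ ((0 ≤ a 1 ∧ ∀ i, 2 ≤ i → i ≤ 2 * n → 1 ≤ a i)
    ∨ (a 1 ≤ 0 ∧ ∀ i, 2 ≤ i → i ≤ 2 * n → a i ≤ -1))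

/-- Value of the continued fraction `a i + 1/(a (i+1) + 1/(⋯ + 1/(a last)))`. -/
def cfVal (a : ℕ → ℤ) (last i : ℕ) : ℚ :=
  if last ≤ i then (a i : ℚ)
  else (a i : ℚ) + 1 / cfVal a last (i + 1)
termination_by last - i
decreasing_by omega

/-- `a` (on indices 1,…,2n) is the even continued fraction expansion of the rational `x`:
for `x ≠ 0` it is an even continued form of value `x`; by convention the expansion of `0`
is `(−1, 1)`. -/
def IsECFExp (n : ℕ) (a : ℕ → ℤ) (x : ℚ) : Prop :=
  (x ≠ 0 ∧ IsEvenForm n a ∧ cfVal a (2 * n) 1 = x) ∨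
  (x = 0 ∧ n = 1 ∧ a 1 = -1 ∧ a 2 = 1)

/-- The right q-deformation attached to expansion data `(n, a)`:
the image of ∞ under the Möbius transformation of β(a, q). -/
noncomputable def sharpVal (q : ℝ) (n : ℕ) (a : ℕ → ℤ) : ℝ :=
  mobiusInf (betaMat q a (2 * n))

/-- The left q-deformation attached to expansion data `(n, a)`:
the image of 1/(1−q) under the Möbius transformation of β(a, q). -/
noncomputable def flatVal (q : ℝ) (n : ℕ) (a : ℕ → ℤ) : ℝ :=
  mobiusAct (betaMat q a (2 * n)) (1 / (1 - q))

/-- The q-integer [m]_q = 1 + q + ⋯ + q^{m−1} (for m ≥ 0). -/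
noncomputable def qInt (q : ℝ) (m : ℤ) : ℝ := ∑ i ∈ Finset.range m.toNat, q ^ i

/-- The left q-integer [m]♭_q = 1 + q + ⋯ + q^{m−2} + q^m (for m ≥ 1). -/
noncomputable def qIntFlat (q : ℝ) (m : ℤ) : ℝ :=
  (∑ i ∈ Finset.range (m - 1).toNat, q ^ i) + q ^ m

/-- The backwards recursion for the left q-deformed continued fraction:
`yFlat q a last k` is y_k, where y_last = [a_last]♭_{q⁻¹} and
y_k = [a_k]_q + q^{a_k}/y_{k+1} for k odd, y_k = [a_k]_{q⁻¹} + q^{−a_k}/y_{k+1} for k even. -/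
noncomputable def yFlat (q : ℝ) (a : ℕ → ℤ) (last k : ℕ) : ℝ :=
  if last ≤ k then qIntFlat q⁻¹ (a k)
  else if k % 2 = 1 then qInt q (a k) + q ^ (a k) / yFlat q a last (k + 1)
  else qInt q⁻¹ (a k) + q ^ (-(a k)) / yFlat q a last (k + 1)
termination_by last - k
decreasing_by all_goals omega


section FlatAux

/-- The `k`-th factor of the beta matrix product. -/
noncomputable def facMat (q : ℝ) (a : ℕ → ℤ) (k : ℕ) : Matrix (Fin 2) (Fin 2) ℝ :=
  if k % 2 = 1 then sig1 q ^ (-(a k)) else sig2 q ^ (a k)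

lemma betaMat_succ (q : ℝ) (a : ℕ → ℤ) (k : ℕ) :
    betaMat q a (k + 1) = betaMat q a k * facMat q a (k + 1) := rfl

/-- The vector obtained by applying the factors `k, k+1, …, last` to `(1/(1-q), 1)`. -/
noncomputable def vF (q : ℝ) (a : ℕ → ℤ) (last : ℕ) (k : ℕ) : Fin 2 → ℝ :=
  if last < k then ![1 / (1 - q), 1] else (facMat q a k).mulVec (vF q a last (k + 1))
termination_by last + 1 - k
decreasing_by omega

lemma pow_aux1 (q : ℝ) (t : ℕ) :
    !![q, 1; 0, 1] ^ t = !![q ^ t, ∑ i ∈ Finset.range t, q ^ i; 0, (1:ℝ)] := by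
  induction t with
  | zero => simp [Matrix.one_fin_two]
  | succ t ih =>
      rw [pow_succ, ih]
      ext i j
      fin_cases i <;> fin_cases j <;>
        simp [Finset.sum_range_succ, pow_succ, Matrix.mul_fin_two] <;> ring

lemma sig1_zpow (q : ℝ) (hq : q ≠ 0) (m : ℤ) (hm : 0 ≤ m) :
    sig1 q ^ (-m) = !![q ^ m, qInt q m; 0, 1] := by
  obtain ⟨t, rfl⟩ := Int.eq_ofNat_of_zero_le hm
  have hAB : !![q, 1; 0, (1:ℝ)] * !![q⁻¹, -q⁻¹; 0, (1:ℝ)] = 1 := by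
    ext i j; fin_cases i <;> fin_cases j <;>
      simp [Matrix.mul_fin_two, Matrix.one_fin_two, hq]
  have hBA : !![q⁻¹, -q⁻¹; 0, (1:ℝ)] * !![q, 1; 0, (1:ℝ)] = 1 := by
    ext i j; fin_cases i <;> fin_cases j <;>
      simp [Matrix.mul_fin_two, Matrix.one_fin_two, hq]
  have hc : Commute !![q, 1; 0, (1:ℝ)] !![q⁻¹, -q⁻¹; 0, (1:ℝ)] := hAB.trans hBA.symm
  have h1 : !![q, 1; 0, (1:ℝ)] ^ t * !![q⁻¹, -q⁻¹; 0, (1:ℝ)] ^ t = 1 := by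
    rw [← hc.mul_pow, hAB, one_pow]
  rw [sig1, Matrix.zpow_neg_natCast, Matrix.inv_eq_left_inv h1, pow_aux1, qInt, zpow_natCast]
  simp

lemma pow_aux2 (q : ℝ) (t : ℕ) :
    !![1, 0; 1, q⁻¹] ^ t = !![1, 0; ∑ i ∈ Finset.range t, q⁻¹ ^ i, (q⁻¹ : ℝ) ^ t] := by
  induction t with
  | zero => simp [Matrix.one_fin_two]
  | succ t ih =>
      rw [pow_succ, ih]
      ext i j
      fin_cases i <;> fin_cases j <;>
        simp [Finset.sum_range_succ, pow_succ, Matrix.mul_fin_two] <;> ring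

lemma sig2_zpow (q : ℝ) (hq : q ≠ 0) (m : ℤ) (hm : 0 ≤ m) :
    sig2 q ^ m = !![1, 0; qInt q⁻¹ m, q ^ (-m)] := by
  obtain ⟨t, rfl⟩ := Int.eq_ofNat_of_zero_le hm
  rw [sig2, zpow_natCast, pow_aux2, qInt]
  have : (q : ℝ) ^ (-(t:ℤ)) = (q⁻¹) ^ t := by
    rw [_root_.zpow_neg, ← _root_.inv_zpow, zpow_natCast]
  rw [this]
  simp

lemma qInt_nonneg {q : ℝ} (hq : 0 ≤ q) (m : ℤ) : 0 ≤ qInt q m :=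
  Finset.sum_nonneg fun i _ => pow_nonneg hq i

lemma qInt_pos {q : ℝ} (hq : 0 < q) {m : ℤ} (hm : 1 ≤ m) : 0 < qInt q m := by
  apply Finset.sum_pos (fun i _ => pow_pos hq i)
  rw [Finset.nonempty_range_iff]
  omega

lemma qIntFlat_pos {q : ℝ} (hq : 0 < q) (m : ℤ) : 0 < qIntFlat q m := by
  have h1 : (0:ℝ) ≤ ∑ i ∈ Finset.range (m - 1).toNat, q ^ i :=
    Finset.sum_nonneg fun i _ => pow_nonneg hq.le i
  have h2 : (0:ℝ) < q ^ m := zpow_pos hq m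
  rw [qIntFlat]; linarith

lemma qIntFlat_eq {q : ℝ} (hq : q ≠ 0) {m : ℤ} (hm : 1 ≤ m) :
    qIntFlat q⁻¹ m = qInt q⁻¹ m + q ^ (-m) * (1 - q) := by
  obtain ⟨t, rfl⟩ : ∃ t : ℕ, m = (t : ℤ) := ⟨m.toNat, (Int.toNat_of_nonneg (by omega)).symm⟩
  have ht : 1 ≤ t := by exact_mod_cast hm
  obtain ⟨s, rfl⟩ : ∃ s, t = s + 1 := ⟨t - 1, by omega⟩
  rw [qIntFlat, qInt]
  have e1 : ((s + 1 : ℕ) : ℤ) - 1 = (s : ℤ) := by push_cast; ring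
  rw [e1]
  simp only [Int.toNat_natCast]
  rw [Finset.sum_range_succ]
  have e2 : (q⁻¹ : ℝ) ^ ((s + 1 : ℕ) : ℤ) = (q⁻¹) ^ (s + 1) := by
    rw [zpow_natCast]
  have e3 : (q : ℝ) ^ (-((s + 1 : ℕ) : ℤ)) = (q⁻¹) ^ (s + 1) := by
    rw [_root_.zpow_neg, ← _root_.inv_zpow, zpow_natCast]
  rw [e2, e3]
  have e4 : (q⁻¹ : ℝ) ^ (s + 1) * q = q⁻¹ ^ s := by
    rw [pow_succ, mul_assoc, inv_mul_cancel₀ hq, mul_one]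
  ring_nf
  rw [mul_comm ((q⁻¹ : ℝ) ^ (s + 1)) q, mul_comm] at *
  field_simp
  ring

end FlatAux


lemma flat_inv (q : ℝ) (hq0 : 0 < q) (hq1 : q < 1) (n : ℕ) (hn : 1 ≤ n)
    (a : ℕ → ℤ) (h1 : 0 ≤ a 1) (h2 : ∀ i, 2 ≤ i → i ≤ 2 * n → 1 ≤ a i) :
    ∀ d k, k = 2 * n - d → 1 ≤ k → k ≤ 2 * n →
      ((k % 2 = 0 → 0 < vF q a (2*n) k 0 ∧
          vF q a (2*n) k 1 = yFlat q a (2*n) k * vF q a (2*n) k 0 ∧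
          0 < yFlat q a (2*n) k) ∧
       (k % 2 = 1 → 0 < vF q a (2*n) k 1 ∧
          vF q a (2*n) k 0 = yFlat q a (2*n) k * vF q a (2*n) k 1 ∧
          (2 ≤ k → 0 < yFlat q a (2*n) k))) := by
  have hq : q ≠ 0 := hq0.ne'
  have h1q : (0:ℝ) < 1 - q := by linarith
  have hz : (0:ℝ) < 1 / (1 - q) := by positivity
  have hqi : (0:ℝ) < q⁻¹ := by positivity
  intro d
  induction d with
  | zero =>
      intro k hk hk1 hk2
      have hkN : k = 2 * n := by omega
      subst hkN
      constructor
      · intro _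
        have ha : 1 ≤ a (2 * n) := h2 (2 * n) (by omega) le_rfl
        have hvtail : vF q a (2*n) (2*n + 1) = ![1 / (1 - q), 1] := by
          rw [vF]; rw [if_pos (by omega)]
        have hvF : vF q a (2*n) (2*n) =
            (!![1, 0; qInt q⁻¹ (a (2*n)), q ^ (-(a (2*n)))]).mulVec ![1 / (1 - q), 1] := by
          rw [vF, if_neg (by omega), facMat, if_neg (by omega),
            sig2_zpow q hq _ (by omega), hvtail]
        have hy : yFlat q a (2*n) (2*n) = qIntFlat q⁻¹ (a (2*n)) := by
          rw [yFlat, if_pos le_rfl]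
        have hv0 : vF q a (2*n) (2*n) 0 = 1 / (1 - q) := by
          rw [hvF]; simp [Matrix.mulVec, dotProduct, Fin.sum_univ_two]
        have hv1 : vF q a (2*n) (2*n) 1
            = qInt q⁻¹ (a (2*n)) * (1 / (1 - q)) + q ^ (-(a (2*n))) := by
          rw [hvF]; simp [Matrix.mulVec, dotProduct, Fin.sum_univ_two]
        refine ⟨by rw [hv0]; exact hz, ?_, by rw [hy]; exact qIntFlat_pos hqi _⟩
        rw [hv0, hv1, hy, qIntFlat_eq hq ha, add_mul]
        congr 1
        rw [mul_one_div, mul_div_cancel_right₀ _ (by linarith : (1:ℝ) - q ≠ 0)]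
      · intro h; omega
  | succ d ih =>
      intro k hk hk1 hk2
      have hklt : k < 2 * n := by omega
      have IH := ih (k + 1) (by omega) (by omega) (by omega)
      rcases Nat.even_or_odd k with hke | hko
      · -- k even, so k ≥ 2
        have hkmod : k % 2 = 0 := Nat.even_iff.mp hke
        have hk2' : 2 ≤ k := by omega
        have ha : 1 ≤ a k := h2 k hk2' (by omega)
        obtain ⟨hw1, hw0, hyy⟩ := IH.2 (by omega)
        have hy' : 0 < yFlat q a (2*n) (k+1) := hyy (by omega)
        set w := vF q a (2*n) (k+1) with hw
        have hvF : vF q a (2*n) k =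
            (!![1, 0; qInt q⁻¹ (a k), q ^ (-(a k))]).mulVec w := by
          rw [vF, if_neg (by omega), facMat, if_neg (by omega),
            sig2_zpow q hq _ (by omega)]
        have hv0 : vF q a (2*n) k 0 = w 0 := by
          rw [hvF]; simp [Matrix.mulVec, dotProduct, Fin.sum_univ_two]
        have hv1 : vF q a (2*n) k 1 = qInt q⁻¹ (a k) * w 0 + q ^ (-(a k)) * w 1 := by
          rw [hvF]; simp [Matrix.mulVec, dotProduct, Fin.sum_univ_two]
        have hy : yFlat q a (2*n) k
            = qInt q⁻¹ (a k) + q ^ (-(a k)) / yFlat q a (2*n) (k+1) := by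
          rw [yFlat, if_neg (by omega), if_neg (by omega)]
        refine ⟨fun _ => ⟨?_, ?_, ?_⟩, fun h => by omega⟩
        · rw [hv0, hw0]; exact mul_pos hy' hw1
        · rw [hv0, hv1, hw0, hy]
          field_simp
        · rw [hy]
          have := qInt_pos hqi ha
          have := div_pos (zpow_pos hq0 (-(a k))) hy'
          linarith
      · -- k odd
        have hkmod : k % 2 = 1 := Nat.odd_iff.mp hko
        have hak : 0 ≤ a k := by
          rcases eq_or_ne k 1 with rfl | hne
          · exact h1
          · exact le_trans (by norm_num) (h2 k (by omega) (by omega))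
        obtain ⟨hw0, hw1, hy'⟩ := IH.1 (by omega)
        set w := vF q a (2*n) (k+1) with hw
        have hvF : vF q a (2*n) k =
            (!![q ^ (a k), qInt q (a k); 0, 1]).mulVec w := by
          rw [vF, if_neg (by omega), facMat, if_pos (by omega),
            sig1_zpow q hq _ hak]
        have hv0 : vF q a (2*n) k 0 = q ^ (a k) * w 0 + qInt q (a k) * w 1 := by
          rw [hvF]; simp [Matrix.mulVec, dotProduct, Fin.sum_univ_two]
        have hv1 : vF q a (2*n) k 1 = w 1 := by
          rw [hvF]; simp [Matrix.mulVec, dotProduct, Fin.sum_univ_two]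
        have hy : yFlat q a (2*n) k
            = qInt q (a k) + q ^ (a k) / yFlat q a (2*n) (k+1) := by
          rw [yFlat, if_neg (by omega), if_pos hkmod]
        refine ⟨fun h => by omega, fun _ => ⟨?_, ?_, ?_⟩⟩
        · rw [hv1, hw1]; exact mul_pos hy' hw0
        · rw [hv0, hv1, hw1, hy]
          field_simp
          ring
        · intro hk2''
          rw [hy]
          have := qInt_pos hq0 (h2 k (by omega) (by omega))
          have := div_pos (zpow_pos hq0 (a k)) hy'
          linarith

lemma beta_vF (q : ℝ) (a : ℕ → ℤ) (n : ℕ) :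
    ∀ d k, k + d = 2 * n →
      (betaMat q a (2*n)).mulVec ![1 / (1 - q), 1]
        = (betaMat q a k).mulVec (vF q a (2*n) (k+1)) := by
  intro d
  induction d with
  | zero =>
      intro k hk
      have hkN : k = 2 * n := by omega
      subst hkN
      have : vF q a (2*n) (2*n + 1) = ![1 / (1 - q), 1] := by
        rw [vF]; rw [if_pos (by omega)]
      rw [this]
  | succ d ih =>
      intro k hk
      have := ih (k + 1) (by omega)
      rw [this, betaMat_succ, ← Matrix.mulVec_mulVec]
      congr 1
      rw [show vF q a (2*n) (k+1) = (facMat q a (k+1)).mulVec (vF q a (2*n) (k+2)) from by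
        rw [vF, if_neg (by omega)]]

/-- q-deformed continued fraction formula for left q-rationals:
for a positive even continued form a and 0 < q < 1, all y_k (2 ≤ k ≤ 2n) are positive,
the Möbius image of 1/(1−q) under β(a, q) is well-defined (its denominator is nonzero),
and it equals y₁. -/
theorem flat_continued_fraction_formula (q : ℝ) (hq0 : 0 < q) (hq1 : q < 1)
    (n : ℕ) (hn : 1 ≤ n)
    (a : ℕ → ℤ) (h1 : 0 ≤ a 1) (h2 : ∀ i, 2 ≤ i → i ≤ 2 * n → 1 ≤ a i) :
    (∀ k, 2 ≤ k → k ≤ 2 * n → 0 < yFlat q a (2 * n) k) ∧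
    betaMat q a (2 * n) 1 0 * (1 / (1 - q)) + betaMat q a (2 * n) 1 1 ≠ 0 ∧
    mobiusAct (betaMat q a (2 * n)) (1 / (1 - q)) = yFlat q a (2 * n) 1 := by
  have hq : q ≠ 0 := hq0.ne'
  have h1q : (0:ℝ) < 1 - q := by linarith
  have hvec : (betaMat q a (2*n)).mulVec ![1 / (1 - q), 1] = vF q a (2*n) 1 := by
    have := beta_vF q a n (2 * n) 0 (by omega)
    rw [this]
    show (1 : Matrix (Fin 2) (Fin 2) ℝ).mulVec _ = _
    rw [Matrix.one_mulVec]
  have hinv := flat_inv q hq0 hq1 n hn a h1 h2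
  have P1 := (hinv (2 * n - 1) 1 (by omega) le_rfl (by omega)).2 (by norm_num)
  have hden : betaMat q a (2 * n) 1 0 * (1 / (1 - q)) + betaMat q a (2 * n) 1 1
      = vF q a (2*n) 1 1 := by
    rw [← hvec]; simp [Matrix.mulVec, dotProduct, Fin.sum_univ_two]
  have hnum : betaMat q a (2 * n) 0 0 * (1 / (1 - q)) + betaMat q a (2 * n) 0 1
      = vF q a (2*n) 1 0 := by
    rw [← hvec]; simp [Matrix.mulVec, dotProduct, Fin.sum_univ_two]
  obtain ⟨hv1, hv0, _⟩ := P1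
  refine ⟨?_, ?_, ?_⟩
  · intro k hk2 hkn
    have Pk := hinv (2 * n - k) k (by omega) (by omega) hkn
    rcases Nat.even_or_odd k with hke | hko
    · exact (Pk.1 (Nat.even_iff.mp hke)).2.2
    · exact (Pk.2 (Nat.odd_iff.mp hko)).2.2 hk2
  · rw [hden]; exact hv1.ne'
  · rw [mobiusAct, hden, hnum, hv0, mul_div_assoc, div_self hv1.ne', mul_one]
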